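/- Let λ > 0, let (x_j : j ∈ ℤ) be a Riesz-basis sequence, let f ∈ PW_π, and let (a(j,λ)) be the coefficients of the Gaussian interpolant I_λ(f). Let ψ_λ be the restriction to [-π,π] of the function Ψ_λ(u) := ∑_{j∈ℤ} a(j,λ) e^{-i x_j u}. Then ‖ψ_λ‖_{L²[-π,π]} ≤ √(λ/π) · e^{π²/(4λ)} · ‖F[f]‖_{L²[-π,π]}. -/

import Mathlib

/-!
Let `G(u) = √(π/λ) e^{-u²/(4λ)}` be the Fourier transform of the Gaussian `e^{-λt²}` and
`S_s(u) = ∑_{j ∈ s} a_j e^{-i x_j u}`. For finite `s`,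
`2π ∑_{j,k ∈ s} a_j ā_k e^{-λ(x_j - x_k)²} = ∫_ℝ G |S_s|² ≥ G(π) ‖S_s‖²_{L²[-π,π]}`.
The lower Riesz bound forces the `x_j` to be uniformly separated, so the double series converges
absolutely; summing first over `k`, the interpolation conditions turn it into
`∑_j a_j conj (f x_j) = (2π)⁻¹ ⟪F[f], Ψ⟫` by Fourier inversion on `PW_π`. Letting `s` grow gives
`G(π) ‖Ψ‖² ≤ re ⟪F[f], Ψ⟫ ≤ ‖F[f]‖ ‖Ψ‖`, and `G(π)⁻¹ = √(λ/π) e^{π²/(4λ)}`.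
-/

noncomputable section

open MeasureTheory Filter Complex

/-- The interval `[-π, π]`. -/
def Iππ : Set ℝ := Set.Icc (-Real.pi) Real.pi

/-- Lebesgue measure restricted to `[-π, π]`. -/
def μπ : Measure ℝ := volume.restrict Iππ

/-- The exponential `e_j(t) = e^{-i x_j t}`. -/
def rbFun (x : ℤ → ℝ) (j : ℤ) (t : ℝ) : ℂ := Complex.exp (-(Complex.I * (x j) * t))

/-- Square-summability of a complex sequence. -/
def SqSummable (a : ℤ → ℂ) : Prop := Summable fun j => ‖a j‖ ^ 2

/-- The series `∑_{j} c_j F_j` converges unconditionally to `h` in `L²(μ)`. -/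
def L2SumTo {α ι : Type*} [MeasurableSpace α] (μ : Measure α) (c : ι → ℂ)
    (F : ι → α → ℂ) (h : α → ℂ) : Prop :=
  Tendsto (fun s : Finset ι => eLpNorm (fun t => h t - ∑ j ∈ s, c j * F j t) 2 μ)
    atTop (nhds 0)

/-- `(x_j : j ∈ ℤ)` is a Riesz-basis sequence with Riesz-basis constant `B`:
it is strictly increasing and the exponentials `e^{-i x_j t}` form a Riesz basis
of `L²[-π,π]`. -/
def RieszBasisSeq (x : ℤ → ℝ) (B : ℝ) : Prop :=
  StrictMono x ∧ 1 ≤ B ∧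
    (∀ h : ℝ → ℂ, MemLp h 2 μπ →
      ∃! a : ℤ → ℂ, SqSummable a ∧ L2SumTo μπ a (rbFun x) h) ∧
    (∀ c : ℤ → ℂ, SqSummable c →
      ∃ h : ℝ → ℂ, MemLp h 2 μπ ∧ L2SumTo μπ c (rbFun x) h ∧
        B⁻¹ * Real.sqrt (∑' j, ‖c j‖ ^ 2) ≤ (eLpNorm h 2 μπ).toReal ∧
        (eLpNorm h 2 μπ).toReal ≤ B * Real.sqrt (∑' j, ‖c j‖ ^ 2))

/-- Truncated Fourier integral `∫_{-N}^N f(t) e^{-iut} dt`. -/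
def truncFT (f : ℝ → ℂ) (N : ℝ) (u : ℝ) : ℂ :=
  ∫ t in Set.Icc (-N) N, f t * Complex.exp (-(Complex.I * u * t))

/-- `g` is the `L²` Fourier transform of `f` (normalization `F[f](u) = ∫ f(t)e^{-iut} dt`),
i.e. the truncated Fourier integrals of `f` converge to `g` in `L²(ℝ)`. -/
def IsFT (f g : ℝ → ℂ) : Prop :=
  MemLp f 2 volume ∧ MemLp g 2 volume ∧
    Tendsto (fun N : ℝ => eLpNorm (fun u => g u - truncFT f N u) 2 volume) atTop (nhds 0)

/-- The Paley–Wiener space `PW_π`: square-integrable functions whose Fourier transform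
vanishes a.e. outside `[-π,π]`, identified with their continuous representatives. -/
def PW (f : ℝ → ℂ) : Prop :=
  MemLp f 2 volume ∧
    ∃ φ : ℝ → ℂ, IsFT f φ ∧ (∀ᵐ u ∂(volume : Measure ℝ), u ∉ Iππ → φ u = 0) ∧
      ∀ t : ℝ, f t = (1 / (2 * (Real.pi : ℂ))) *
        ∫ u in Iππ, φ u * Complex.exp (Complex.I * u * t)

/-- The Gaussian `g_λ(t) = e^{-λ t²}`, as a complex number. -/
def gauss (lam t : ℝ) : ℂ := Real.exp (-(lam * t ^ 2))

/-- `a` is the (square-summable) coefficient sequence of the Gaussian interpolant to `f`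
at the data sites `(x_j)`. -/
def GaussCoeffs (lam : ℝ) (x : ℤ → ℝ) (f : ℝ → ℂ) (a : ℤ → ℂ) : Prop :=
  SqSummable a ∧ ∀ k : ℤ, HasSum (fun j => a j * gauss lam (x k - x j)) (f (x k))

/-- The Gaussian interpolant `x ↦ ∑_j a_j e^{-λ(x-x_j)²}`. -/
def gaussInterp (lam : ℝ) (x : ℤ → ℝ) (a : ℤ → ℂ) (t : ℝ) : ℂ :=
  ∑' j, a j * gauss lam (t - x j)

/-- `κ(α) = 2e^{-α}/(1-e^{-α})`. -/
def kappa (α : ℝ) : ℝ := 2 * Real.exp (-α) / (1 - Real.exp (-α))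

/-- `Ψ` is the locally-`L²` function defined by the series `∑_j a_j e^{-i x_j u}`,
via `L²` convergence on each interval `[(2l-1)π, (2l+1)π]`. -/
def LocL2Limit (x : ℤ → ℝ) (a : ℤ → ℂ) (Ψ : ℝ → ℂ) : Prop :=
  ∀ l : ℤ,
    MemLp Ψ 2 (volume.restrict (Set.Icc ((2 * l - 1) * Real.pi) ((2 * l + 1) * Real.pi))) ∧
    L2SumTo (volume.restrict (Set.Icc ((2 * l - 1) * Real.pi) ((2 * l + 1) * Real.pi)))
      a (rbFun x) Ψ

end

open MeasureTheory Filter Complex Topology Real ComplexConjugate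
open scoped InnerProductSpace

instance : IsFiniteMeasure μπ := by
  unfold μπ Iππ
  infer_instance

@[fun_prop]
lemma continuous_rbFun (x : ℤ → ℝ) (j : ℤ) : Continuous (rbFun x j) := by
  unfold rbFun
  fun_prop

lemma norm_rbFun (x : ℤ → ℝ) (j : ℤ) (t : ℝ) : ‖rbFun x j t‖ = 1 := by
  simp [rbFun, Complex.norm_exp]

lemma memLp_rbFun (x : ℤ → ℝ) (j : ℤ) : MemLp (rbFun x j) 2 μπ :=
  .of_bound (continuous_rbFun x j).aestronglyMeasurable 1
    (.of_forall fun t => (norm_rbFun x j t).le)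

noncomputable def expSum (x : ℤ → ℝ) (a : ℤ → ℂ) (s : Finset ℤ) (u : ℝ) : ℂ :=
  ∑ j ∈ s, a j * rbFun x j u

section expSum

variable (x : ℤ → ℝ) (a : ℤ → ℂ) (s : Finset ℤ)

lemma continuous_expSum : Continuous (expSum x a s) :=
  continuous_finsetSum _ fun j _ => continuous_const.mul (continuous_rbFun x j)

lemma norm_expSum_le (u : ℝ) : ‖expSum x a s u‖ ≤ ∑ j ∈ s, ‖a j‖ :=
  (norm_sum_le _ _).trans_eq (Finset.sum_congr rfl fun j _ => by rw [norm_mul, norm_rbFun, mul_one])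

lemma memLp_expSum : MemLp (expSum x a s) 2 μπ :=
  .of_bound (continuous_expSum x a s).aestronglyMeasurable _ (.of_forall (norm_expSum_le x a s))

lemma expSum_mul_conj (u : ℝ) : expSum x a s u * conj (expSum x a s u)
    = ∑ p ∈ s ×ˢ s, a p.1 * conj (a p.2) * Complex.exp (-(I * ↑(x p.1 - x p.2) * u)) := by
  rw [expSum, map_sum, Finset.sum_mul_sum, ← Finset.sum_product']
  refine Finset.sum_congr rfl fun p _ => ?_
  simp only [rbFun, map_mul, ← Complex.exp_conj, map_neg, Complex.conj_I, Complex.conj_ofReal]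
  rw [mul_mul_mul_comm, ← Complex.exp_add]
  push_cast
  ring_nf

end expSum

lemma sq_toReal_eLpNorm_two {α E : Type*} [MeasurableSpace α] [NormedAddCommGroup E]
    {μ : Measure α} {f : α → E} (hf : MemLp f 2 μ) : (eLpNorm f 2 μ).toReal ^ 2 = ∫ u, ‖f u‖ ^ 2 ∂μ := by
  rw [hf.eLpNorm_eq_integral_rpow_norm two_ne_zero ENNReal.ofNat_ne_top,
    ENNReal.toReal_ofReal (by positivity)]
  simp only [ENNReal.toReal_ofNat, Real.rpow_two]
  exact Real.rpow_inv_natCast_pow (n := 2) (integral_nonneg fun _ => by positivity) two_ne_zero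

lemma L2SumTo.ae_eq_finsetSum {α ι : Type*} [MeasurableSpace α] {μ : Measure α} {c : ι → ℂ}
    {F : ι → α → ℂ} {h : α → ℂ} (hh : L2SumTo μ c F h) {t : Finset ι} (hc : ∀ j ∉ t, c j = 0)
    (hmeas : AEStronglyMeasurable (fun u => h u - ∑ j ∈ t, c j * F j u) μ) :
    h =ᵐ[μ] fun u => ∑ j ∈ t, c j * F j u := by
  have hzero : eLpNorm (fun u => h u - ∑ j ∈ t, c j * F j u) 2 μ = 0 := by
    refine tendsto_nhds_unique (tendsto_const_nhds.congr' ?_) hh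
    filter_upwards [eventually_ge_atTop t] with s hs
    congr 1
    funext u
    rw [Finset.sum_subset hs fun j _ hj => by simp [hc j hj]]
  filter_upwards [(eLpNorm_eq_zero_iff hmeas two_ne_zero).1 hzero] with u hu
  exact sub_eq_zero.1 hu

lemma RieszBasisSeq.inv_mul_sqrt_two_le_eLpNorm_rbFun_sub {x : ℤ → ℝ} {B : ℝ}
    (hx : RieszBasisSeq x B) {j k : ℤ} (hjk : j ≠ k) : B⁻¹ * √2 ≤ (eLpNorm (fun u => rbFun x j u - rbFun x k u) 2 μπ).toReal := by
  classical
  set c : ℤ → ℂ := Pi.single j 1 - Pi.single k 1 with hc_def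
  have hc : ∀ i ∉ ({j, k} : Finset ℤ), c i = 0 := by
    intro i hi
    simp only [Finset.mem_insert, Finset.mem_singleton, not_or] at hi
    simp [hc_def, hi.1, hi.2]
  have hcj : c j = 1 := by simp [hc_def, hjk]
  have hck : c k = -1 := by simp [hc_def, hjk.symm]
  have hsq : SqSummable c := summable_of_ne_finset_zero (s := {j, k}) fun i hi => by simp [hc i hi]
  obtain ⟨h, hmem, hsum, hlow, -⟩ := hx.2.2.2 c hsq
  have hnorm : ∑' i, ‖c i‖ ^ 2 = 2 := by
    rw [tsum_eq_sum fun i hi => by simp [hc i hi], Finset.sum_pair hjk, hcj, hck]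
    norm_num
  have hmeas : AEStronglyMeasurable (fun u => h u - ∑ i ∈ {j, k}, c i * rbFun x i u) μπ :=
    hmem.aestronglyMeasurable.sub (continuous_expSum x c _).aestronglyMeasurable
  have hae : h =ᵐ[μπ] fun u => rbFun x j u - rbFun x k u := by
    filter_upwards [hsum.ae_eq_finsetSum hc hmeas] with u hu
    rw [hu, Finset.sum_pair hjk, hcj, hck]
    ring
  rwa [hnorm, eLpNorm_congr_ae hae] at hlow

lemma norm_rbFun_sub_rbFun_le (x : ℤ → ℝ) (j k : ℤ) (u : ℝ) :
    ‖rbFun x j u - rbFun x k u‖ ≤ |x j - x k| * |u| := by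
  have hfac : rbFun x j u - rbFun x k u
      = rbFun x k u * (Complex.exp (I * ((-((x j - x k) * u) : ℝ) : ℂ)) - 1) := by
    simp only [rbFun, mul_sub, mul_one, ← Complex.exp_add]
    push_cast
    ring_nf
  rw [hfac, norm_mul, norm_rbFun, one_mul, ← abs_mul, ← abs_neg, ← Real.norm_eq_abs]
  exact Real.norm_exp_I_mul_ofReal_sub_one_le

lemma toReal_eLpNorm_rbFun_sub_le (x : ℤ → ℝ) (j k : ℤ) :
    (eLpNorm (fun u => rbFun x j u - rbFun x k u) 2 μπ).toReal ≤ √(2 * π ^ 3) * |x j - x k| := by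
  have hbound : ∀ᵐ u ∂μπ, ‖rbFun x j u - rbFun x k u‖ ^ 2 ≤ (π * |x j - x k|) ^ 2 := by
    filter_upwards [ae_restrict_mem measurableSet_Icc] with u hu
    have hu : |u| ≤ π := abs_le.2 (by simpa [Iππ] using hu)
    gcongr
    calc ‖rbFun x j u - rbFun x k u‖ ≤ |x j - x k| * |u| := norm_rbFun_sub_rbFun_le x j k u
      _ ≤ π * |x j - x k| := by rw [mul_comm]; gcongr
  have hμ : μπ.real Set.univ = 2 * π := by
    rw [measureReal_def, μπ, Measure.restrict_apply_univ, Iππ, Real.volume_Icc,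
      ENNReal.toReal_ofReal (by linarith [pi_pos])]
    ring
  have hsq : (eLpNorm (fun u => rbFun x j u - rbFun x k u) 2 μπ).toReal ^ 2
      ≤ (√(2 * π ^ 3) * |x j - x k|) ^ 2 := by
    rw [sq_toReal_eLpNorm_two (f := fun u => rbFun x j u - rbFun x k u)
      ((memLp_rbFun x j).sub (memLp_rbFun x k))]
    have hint : Integrable (fun u => ‖rbFun x j u - rbFun x k u‖ ^ 2) μπ :=
      (by fun_prop : Continuous fun u => ‖rbFun x j u - rbFun x k u‖ ^ 2).integrableOn_Icc
    calc ∫ u, ‖rbFun x j u - rbFun x k u‖ ^ 2 ∂μπ ≤ ∫ _, (π * |x j - x k|) ^ 2 ∂μπ :=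
          integral_mono_ae hint (integrable_const _) hbound
      _ = (√(2 * π ^ 3) * |x j - x k|) ^ 2 := by
          rw [integral_const, smul_eq_mul, hμ, mul_pow √(2 * π ^ 3), Real.sq_sqrt (by positivity)]
          ring
  exact (pow_le_pow_iff_left₀ ENNReal.toReal_nonneg (by positivity) two_ne_zero).1 hsq

lemma mul_sub_le_sub_of_forall_le_sub_succ {x : ℤ → ℝ} {δ : ℝ} (h : ∀ k, δ ≤ x (k + 1) - x k)
    {k j : ℤ} (hkj : k ≤ j) : δ * (j - k) ≤ x j - x k := by
  induction j, hkj using Int.leInduction with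
  | base => simp
  | succ j _ ih =>
    push_cast
    linarith [h j]

lemma RieszBasisSeq.exists_separation {x : ℤ → ℝ} {B : ℝ} (hx : RieszBasisSeq x B) :
    ∃ δ > 0, ∀ j k : ℤ, δ * |(j : ℝ) - k| ≤ |x j - x k| := by
  have hB : 0 < B := one_pos.trans_le hx.2.1
  have hC : 0 < √(2 * π ^ 3) := by positivity
  refine ⟨B⁻¹ * √2 / √(2 * π ^ 3), by positivity, ?_⟩
  have hgap : ∀ k, B⁻¹ * √2 / √(2 * π ^ 3) ≤ x (k + 1) - x k := by
    intro k
    rw [div_le_iff₀ hC, ← abs_of_pos (sub_pos.2 (hx.1 (lt_add_one k))), mul_comm _ √(2 * π ^ 3)]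
    exact (hx.inv_mul_sqrt_two_le_eLpNorm_rbFun_sub (lt_add_one k).ne').trans
      (toReal_eLpNorm_rbFun_sub_le x _ _)
  intro j k
  wlog hkj : k ≤ j generalizing j k
  · rw [abs_sub_comm, abs_sub_comm (x j)]
    exact this k j (le_of_not_ge hkj)
  rw [abs_of_nonneg (sub_nonneg.2 (Int.cast_le.2 hkj)),
    abs_of_nonneg (sub_nonneg.2 (hx.1.monotone hkj))]
  exact mul_sub_le_sub_of_forall_le_sub_succ hgap hkj

lemma summable_exp_neg_mul_int_sq {c : ℝ} (hc : 0 < c) :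
    Summable fun n : ℤ => Real.exp (-(c * n ^ 2)) := by
  refine (summable_pow_mul_jacobiTheta₂_term_bound 0 (T := c / π) (by positivity) 0).congr
    fun n => ?_
  field_simp
  simp

lemma summable_mul_mul_sub_of_summable_sq {b w : ℤ → ℝ} (hb0 : 0 ≤ b) (hb : Summable (b · ^ 2))
    (hw0 : 0 ≤ w) (hw : Summable w) :
    Summable fun p : ℤ × ℤ => b p.1 * b p.2 * w (p.1 - p.2) := by
  -- `b j * b k ≤ (b j ^ 2 + b k ^ 2) / 2`, and each half is a reindexed product of two series.
  have hleft : Summable fun p : ℤ × ℤ => b p.1 ^ 2 * w (p.1 - p.2) :=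
    (hb.mul_of_nonneg hw (fun _ => sq_nonneg _) hw0).comp_injective
      (i := fun p : ℤ × ℤ => (p.1, p.1 - p.2)) fun p q h => by
        simp only [Prod.mk.injEq] at h
        ext <;> omega
  have hright : Summable fun p : ℤ × ℤ => w (p.1 - p.2) * b p.2 ^ 2 :=
    (hw.mul_of_nonneg hb hw0 fun _ => sq_nonneg _).comp_injective
      (i := fun p : ℤ × ℤ => (p.1 - p.2, p.2)) fun p q h => by
        simp only [Prod.mk.injEq] at h
        ext <;> omega
  refine .of_nonneg_of_le (fun p => mul_nonneg (mul_nonneg (hb0 _) (hb0 _)) (hw0 _))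
    (fun p => ?_) ((hleft.add hright).div_const 2)
  nlinarith [mul_nonneg (sq_nonneg (b p.1 - b p.2)) (hw0 (p.1 - p.2))]

lemma norm_gauss (lam t : ℝ) : ‖gauss lam t‖ = Real.exp (-(lam * t ^ 2)) := by
  rw [gauss, Complex.norm_real, Real.norm_of_nonneg (Real.exp_pos _).le]

noncomputable def gaussQuadTerm (lam : ℝ) (x : ℤ → ℝ) (a : ℤ → ℂ) (p : ℤ × ℤ) : ℂ :=
  a p.1 * conj (a p.2) * gauss lam (x p.1 - x p.2)

lemma summable_gaussQuadTerm {lam : ℝ} (hlam : 0 < lam) {x : ℤ → ℝ} {δ : ℝ} (hδ : 0 < δ)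
    (hsep : ∀ j k : ℤ, δ * |(j : ℝ) - k| ≤ |x j - x k|) {a : ℤ → ℂ} (ha : SqSummable a) :
    Summable (gaussQuadTerm lam x a) := by
  have hw := summable_exp_neg_mul_int_sq (mul_pos hlam (pow_pos hδ 2))
  refine Summable.of_norm <| .of_nonneg_of_le (fun _ => norm_nonneg _) (fun p => ?_)
    (summable_mul_mul_sub_of_summable_sq (fun _ => norm_nonneg _) ha
      (fun _ => (Real.exp_pos _).le) hw)
  rw [gaussQuadTerm, norm_mul, norm_mul, RCLike.norm_conj, norm_gauss]
  refine mul_le_mul_of_nonneg_left (Real.exp_le_exp.2 ?_) (by positivity)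
  have hsq : (δ * |(p.1 : ℝ) - p.2|) ^ 2 ≤ (x p.1 - x p.2) ^ 2 := by
    rw [← sq_abs (x p.1 - x p.2)]
    exact pow_le_pow_left₀ (by positivity) (hsep p.1 p.2) 2
  rw [mul_pow, sq_abs] at hsq
  push_cast
  nlinarith

/-- The Fourier transform of `gauss lam`. -/
noncomputable def gaussFourier (lam u : ℝ) : ℝ := √(π / lam) * Real.exp (-(u ^ 2 / (4 * lam)))

section gaussFourier

variable {lam : ℝ} (hlam : 0 < lam)
include hlam

lemma gaussFourier_pos (u : ℝ) : 0 < gaussFourier lam u :=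
  mul_pos (Real.sqrt_pos.2 (div_pos pi_pos hlam)) (Real.exp_pos _)

lemma gaussFourier_pi_le {u : ℝ} (hu : u ∈ Iππ) : gaussFourier lam π ≤ gaussFourier lam u := by
  have hu2 : u ^ 2 ≤ π ^ 2 := sq_le_sq' hu.1 hu.2
  unfold gaussFourier
  gcongr

lemma integrable_gaussFourier : Integrable (gaussFourier lam) := by
  refine ((integrable_exp_neg_mul_sq (b := 1 / (4 * lam)) (by positivity)).const_mul
    √(π / lam)).congr (.of_forall fun u => ?_)
  simp only [gaussFourier, neg_mul]
  ring_nf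

lemma integral_gaussFourier_mul_exp (ξ : ℝ) :
    ∫ u : ℝ, (gaussFourier lam u : ℂ) * Complex.exp (-(I * ξ * u)) = 2 * π * gauss lam ξ := by
  have hb : (0 : ℝ) < 1 / (4 * lam) := by positivity
  have h := fourierIntegral_gaussian (b := ((1 / (4 * lam) : ℝ) : ℂ)) (by simpa using hb) (-ξ)
  have hcpow : (π / ((1 / (4 * lam) : ℝ) : ℂ)) ^ (1 / 2 : ℂ) = ((√(4 * π * lam) : ℝ) : ℂ) := by
    rw [show (π : ℂ) / ((1 / (4 * lam) : ℝ) : ℂ) = ((4 * π * lam : ℝ) : ℂ) by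
        push_cast; field_simp,
      show (1 / 2 : ℂ) = ((1 / 2 : ℝ) : ℂ) by norm_num, ← Complex.ofReal_cpow (by positivity),
      Real.sqrt_eq_rpow]
  have hsqrt : √(π / lam) * √(4 * π * lam) = 2 * π := by
    rw [← Real.sqrt_mul (by positivity), show π / lam * (4 * π * lam) = (2 * π) ^ 2 by
      field_simp; ring, Real.sqrt_sq (by positivity)]
  calc ∫ u : ℝ, (gaussFourier lam u : ℂ) * Complex.exp (-(I * ξ * u))
      = (√(π / lam) : ℂ) * ∫ u : ℝ, Complex.exp (I * (-ξ) * u) *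
          Complex.exp (-((1 / (4 * lam) : ℝ) : ℂ) * u ^ 2) := by
        rw [← integral_const_mul]
        congr 1
        funext u
        simp only [gaussFourier, Complex.ofReal_mul, Complex.ofReal_exp]
        push_cast
        ring_nf
    _ = 2 * π * gauss lam ξ := by
        rw [h, hcpow, gauss, ← mul_assoc, ← Complex.ofReal_mul, hsqrt]
        push_cast
        congr 2
        field_simp

end gaussFourier

lemma integral_gaussFourier_mul_normSq_expSum {lam : ℝ} (hlam : 0 < lam) (x : ℤ → ℝ)
    (a : ℤ → ℂ) (s : Finset ℤ) :
    ((∫ u, gaussFourier lam u * ‖expSum x a s u‖ ^ 2 : ℝ) : ℂ)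
      = 2 * π * ∑ p ∈ s ×ˢ s, gaussQuadTerm lam x a p := by
  have hpoint : ∀ u, ((gaussFourier lam u * ‖expSum x a s u‖ ^ 2 : ℝ) : ℂ)
      = ∑ p ∈ s ×ˢ s, (gaussFourier lam u : ℂ) *
          (a p.1 * conj (a p.2) * Complex.exp (-(I * ↑(x p.1 - x p.2) * u))) := by
    intro u
    rw [← Finset.mul_sum, ← expSum_mul_conj, Complex.mul_conj']
    push_cast
    rfl
  have hint : ∀ p : ℤ × ℤ, Integrable fun u : ℝ => (gaussFourier lam u : ℂ) *
      (a p.1 * conj (a p.2) * Complex.exp (-(I * ↑(x p.1 - x p.2) * u))) := fun p =>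
    (integrable_gaussFourier hlam).ofReal.mul_bdd (c := ‖a p.1‖ * ‖a p.2‖) (by fun_prop)
      (.of_forall fun u => by simp [Complex.norm_exp])
  rw [← integral_complex_ofReal, funext hpoint, integral_finsetSum _ fun p _ => hint p,
    Finset.mul_sum]
  refine Finset.sum_congr rfl fun p _ => ?_
  simp_rw [mul_left_comm (gaussFourier lam _ : ℂ)]
  rw [integral_const_mul, integral_gaussFourier_mul_exp hlam, gaussQuadTerm]
  ring

lemma gaussFourier_pi_mul_sq_le {lam : ℝ} (hlam : 0 < lam) (x : ℤ → ℝ) (a : ℤ → ℂ)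
    (s : Finset ℤ) :
    gaussFourier lam π * (eLpNorm (expSum x a s) 2 μπ).toReal ^ 2
      ≤ 2 * π * (∑ p ∈ s ×ˢ s, gaussQuadTerm lam x a p).re := by
  set g : ℝ → ℝ := fun u => gaussFourier lam u * ‖expSum x a s u‖ ^ 2
  have hmeas := ((continuous_expSum x a s).norm.pow 2).aestronglyMeasurable (μ := volume)
  have hbound : ∀ u, ‖‖expSum x a s u‖ ^ 2‖ ≤ (∑ j ∈ s, ‖a j‖) ^ 2 := fun u => by
    rw [norm_pow, norm_norm]
    gcongr
    exact norm_expSum_le x a s u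
  have hint : Integrable g := (integrable_gaussFourier hlam).mul_bdd hmeas (.of_forall hbound)
  have hre : 2 * π * (∑ p ∈ s ×ˢ s, gaussQuadTerm lam x a p).re = ∫ u, g u := by
    have h := congrArg Complex.re (integral_gaussFourier_mul_normSq_expSum hlam x a s)
    rw [Complex.ofReal_re] at h
    rw [h]
    simp
  rw [hre, sq_toReal_eLpNorm_two (memLp_expSum x a s), ← integral_const_mul]
  calc ∫ u, gaussFourier lam π * ‖expSum x a s u‖ ^ 2 ∂μπ ≤ ∫ u, g u ∂μπ := by
        refine integral_mono_ae ((integrable_const _).mul_bdd hmeas.restrict (.of_forall hbound))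
          hint.integrableOn ?_
        filter_upwards [ae_restrict_mem measurableSet_Icc] with u hu
        exact mul_le_mul_of_nonneg_right (gaussFourier_pi_le hlam hu) (sq_nonneg _)
    _ ≤ ∫ u, g u := setIntegral_le_integral hint
          (.of_forall fun u => mul_nonneg (gaussFourier_pos hlam u).le (sq_nonneg _))

lemma L2SumTo.tendsto_toLp {α ι : Type*} [MeasurableSpace α] {μ : Measure α} {c : ι → ℂ}
    {F : ι → α → ℂ} {h : α → ℂ} (hh : L2SumTo μ c F h)
    (hS : ∀ s : Finset ι, MemLp (fun u => ∑ j ∈ s, c j * F j u) 2 μ) (hmem : MemLp h 2 μ) :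
    Tendsto (fun s => (hS s).toLp _) atTop (𝓝 (hmem.toLp h)) :=
  (Lp.tendsto_Lp_iff_tendsto_eLpNorm'' _ hS h hmem).2
    (hh.congr fun _ => eLpNorm_sub_comm _ _ _ _)

lemma gaussFourier_pi_mul_sq_le_tsum {lam : ℝ} (hlam : 0 < lam) {x : ℤ → ℝ} {a : ℤ → ℂ}
    {Ψ : ℝ → ℂ} (hT : Summable (gaussQuadTerm lam x a)) (hΨ : MemLp Ψ 2 μπ)
    (hsum : L2SumTo μπ a (rbFun x) Ψ) :
    gaussFourier lam π * (eLpNorm Ψ 2 μπ).toReal ^ 2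
      ≤ 2 * π * (∑' p, gaussQuadTerm lam x a p).re := by
  have hnorm : Tendsto (fun s => (eLpNorm (expSum x a s) 2 μπ).toReal) atTop
      (𝓝 (eLpNorm Ψ 2 μπ).toReal) := by
    have h := (hsum.tendsto_toLp (memLp_expSum x a) hΨ).norm
    rw [Lp.norm_toLp] at h
    exact h.congr fun s => Lp.norm_toLp _ _
  have hquad : Tendsto (fun s : Finset ℤ => ∑ p ∈ s ×ˢ s, gaussQuadTerm lam x a p) atTop
      (𝓝 (∑' p, gaussQuadTerm lam x a p)) :=
    hT.hasSum.comp (tendsto_finsetProd_atTop.comp tendsto_atTop_diagonal)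
  refine le_of_tendsto_of_tendsto' ((hnorm.pow 2).const_mul _)
    ((Complex.continuous_re.tendsto _ |>.comp hquad).const_mul _)
    fun s => gaussFourier_pi_mul_sq_le hlam x a s

lemma inner_toLp_toLp_eq_integral {α 𝕜 : Type*} [MeasurableSpace α] [RCLike 𝕜]
    {μ : Measure α} {f g : α → 𝕜} (hf : MemLp f 2 μ) (hg : MemLp g 2 μ) :
    ⟪hf.toLp f, hg.toLp g⟫_𝕜 = ∫ u, conj (f u) * g u ∂μ := by
  rw [L2.inner_def]
  refine integral_congr_ae ?_
  filter_upwards [hf.coeFn_toLp, hg.coeFn_toLp] with u hfu hgu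
  rw [hfu, hgu, RCLike.inner_apply, mul_comm]

section inversion

variable {φ f : ℝ → ℂ}
  (hrep : ∀ t : ℝ, f t = (1 / (2 * (π : ℂ))) * ∫ u in Iππ, φ u * Complex.exp (I * u * t))
include hrep

lemma integral_conj_mul_rbFun (x : ℤ → ℝ) (j : ℤ) :
    ∫ u, conj (φ u) * rbFun x j u ∂μπ = 2 * π * conj (f (x j)) := by
  have hπ : (2 * (π : ℂ)) ≠ 0 := mul_ne_zero two_ne_zero (Complex.ofReal_ne_zero.2 pi_ne_zero)
  rw [hrep, map_mul, ← integral_conj, ← mul_assoc]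
  simp only [map_div₀, map_one, map_mul, map_ofNat, Complex.conj_ofReal, ← Complex.exp_conj,
    Complex.conj_I, rbFun]
  rw [mul_one_div_cancel hπ, one_mul]
  congr 1
  funext u
  ring_nf

lemma inner_toLp_expSum (hφ : MemLp φ 2 μπ) (x : ℤ → ℝ) (a : ℤ → ℂ) (s : Finset ℤ) :
    ⟪hφ.toLp φ, (memLp_expSum x a s).toLp (expSum x a s)⟫_ℂ
      = 2 * π * ∑ j ∈ s, a j * conj (f (x j)) := by
  have hint : ∀ j, Integrable (fun u => conj (φ u) * rbFun x j u) μπ := fun j =>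
    (Complex.conjCLE.toContinuousLinearMap.integrable_comp (hφ.integrable one_le_two)).mul_bdd
      (continuous_rbFun x j).aestronglyMeasurable (.of_forall fun u => (norm_rbFun x j u).le)
  simp_rw [inner_toLp_toLp_eq_integral, expSum, Finset.mul_sum, mul_left_comm _ (a _)]
  rw [integral_finsetSum _ fun j _ => (hint j).const_mul (a j)]
  refine Finset.sum_congr rfl fun j _ => ?_
  rw [integral_const_mul, integral_conj_mul_rbFun hrep]

lemma hasSum_inner_toLp (hφ : MemLp φ 2 μπ) {x : ℤ → ℝ} {a : ℤ → ℂ} {Ψ : ℝ → ℂ}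
    (hΨ : MemLp Ψ 2 μπ) (hsum : L2SumTo μπ a (rbFun x) Ψ) :
    HasSum (fun j => 2 * π * (a j * conj (f (x j)))) ⟪hφ.toLp φ, hΨ.toLp Ψ⟫_ℂ := by
  refine ((tendsto_const_nhds (x := hφ.toLp φ)).inner
    (hsum.tendsto_toLp (memLp_expSum x a) hΨ)).congr fun s => ?_
  rw [← Finset.mul_sum]
  exact inner_toLp_expSum hrep hφ x a s

end inversion

lemma GaussCoeffs.hasSum_mul_conj {lam : ℝ} {x : ℤ → ℝ} {f : ℝ → ℂ} {a : ℤ → ℂ}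
    (ha : GaussCoeffs lam x f a) (hT : Summable (gaussQuadTerm lam x a)) :
    HasSum (fun j => a j * conj (f (x j))) (∑' p, gaussQuadTerm lam x a p) := by
  refine hT.hasSum.prod_fiberwise fun j => ?_
  have h := (Complex.hasSum_conj'.2 (ha.2 j)).mul_left (a j)
  simp only [map_mul, gauss, Complex.conj_ofReal] at h
  simpa only [gaussQuadTerm, gauss, mul_assoc] using h

lemma continuous_truncFT {f : ℝ → ℂ} (hf : MemLp f 2 volume) (N : ℝ) :
    Continuous (truncFT f N) := by
  have hfint : Integrable f (volume.restrict (Set.Icc (-N) N)) :=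
    (hf.restrict _).integrable one_le_two
  refine continuous_of_dominated (bound := fun t => ‖f t‖)
    (fun u => hfint.aestronglyMeasurable.mul (by fun_prop : Continuous _).aestronglyMeasurable)
    (fun u => .of_forall fun t => ?_) hfint.norm (.of_forall fun t => by fun_prop)
  simp [Complex.norm_exp]

lemma IsFT.ae_eq {f g₁ g₂ : ℝ → ℂ} (h₁ : IsFT f g₁) (h₂ : IsFT f g₂) : g₁ =ᵐ[volume] g₂ := by
  have hmeas : ∀ N, AEStronglyMeasurable (truncFT f N) volume := fun N =>
    (continuous_truncFT h₁.1 N).aestronglyMeasurable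
  have hle : ∀ N, eLpNorm (g₁ - g₂) 2 volume ≤ eLpNorm (fun u => g₁ u - truncFT f N u) 2 volume
      + eLpNorm (fun u => g₂ u - truncFT f N u) 2 volume := fun N =>
    calc eLpNorm (g₁ - g₂) 2 volume
        = eLpNorm ((fun u => g₁ u - truncFT f N u) - fun u => g₂ u - truncFT f N u) 2 volume := by
          congr 1
          funext u
          simp
      _ ≤ _ := eLpNorm_sub_le (h₁.2.1.aestronglyMeasurable.sub (hmeas N))
          (h₂.2.1.aestronglyMeasurable.sub (hmeas N)) one_le_two
  have hzero : eLpNorm (g₁ - g₂) 2 volume = 0 :=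
    le_antisymm (ge_of_tendsto' (by simpa using h₁.2.2.add h₂.2.2) hle) bot_le
  filter_upwards [(eLpNorm_eq_zero_iff (h₁.2.1.aestronglyMeasurable.sub
    h₂.2.1.aestronglyMeasurable) two_ne_zero).1 hzero] with u hu
  exact sub_eq_zero.1 hu

lemma LocL2Limit.memLp_and_l2SumTo {x : ℤ → ℝ} {a : ℤ → ℂ} {Ψ : ℝ → ℂ}
    (hΨ : LocL2Limit x a Ψ) : MemLp Ψ 2 μπ ∧ L2SumTo μπ a (rbFun x) Ψ := by
  have hI : Set.Icc ((2 * ((0 : ℤ) : ℝ) - 1) * π) ((2 * ((0 : ℤ) : ℝ) + 1) * π) = Iππ := by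
    simp [Iππ]
  have h := hΨ 0
  rw [hI] at h
  exact h

lemma mul_norm_le_of_mul_sq_le_re_inner {𝕜 E : Type*} [RCLike 𝕜] [NormedAddCommGroup E]
    [InnerProductSpace 𝕜 E] {c : ℝ} {v w : E} (h : c * ‖v‖ ^ 2 ≤ RCLike.re ⟪w, v⟫_𝕜) :
    c * ‖v‖ ≤ ‖w‖ := by
  rcases (norm_nonneg v).eq_or_lt with hv | hv
  · rw [← hv, mul_zero]
    exact norm_nonneg w
  · refine le_of_mul_le_mul_right ?_ hv
    calc c * ‖v‖ * ‖v‖ = c * ‖v‖ ^ 2 := by ring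
      _ ≤ ‖w‖ * ‖v‖ := h.trans (re_inner_le_norm w v)

lemma inv_gaussFourier_pi (lam : ℝ) :
    (gaussFourier lam π)⁻¹ = √(lam / π) * Real.exp (π ^ 2 / (4 * lam)) := by
  rw [gaussFourier, mul_inv, ← Real.sqrt_inv, inv_div, ← Real.exp_neg, neg_neg]

open MeasureTheory Filter Complex in
/-- With `ψ_λ` the restriction to `[-π,π]` of `Ψ_λ(u) = ∑_j a(j,λ) e^{-i x_j u}` (the
coefficients of the Gaussian interpolant of `f ∈ PW_π`), one has
`‖ψ_λ‖_{L²[-π,π]} ≤ √(λ/π) e^{π²/(4λ)} ‖F[f]‖_{L²[-π,π]}`. -/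
theorem statement7 (lam B : ℝ) (hlam : 0 < lam) (x : ℤ → ℝ) (hx : RieszBasisSeq x B)
    (f : ℝ → ℂ) (hf : PW f) (a : ℤ → ℂ) (ha : GaussCoeffs lam x f a)
    (Ψ : ℝ → ℂ) (hΨ : LocL2Limit x a Ψ) (φ : ℝ → ℂ) (hφ : IsFT f φ) :
    (eLpNorm Ψ 2 μπ).toReal ≤
      Real.sqrt (lam / Real.pi) * Real.exp (Real.pi ^ 2 / (4 * lam)) *
        (eLpNorm φ 2 μπ).toReal := by
  obtain ⟨-, φ₀, hφ₀, -, hrep₀⟩ := hf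
  have hrep : ∀ t : ℝ, f t = (1 / (2 * (π : ℂ))) * ∫ u in Iππ, φ u * Complex.exp (I * u * t) :=
    fun t => by
      rw [hrep₀ t, integral_congr_ae ((ae_restrict_of_ae (hφ₀.ae_eq hφ)).mono fun u hu => by
        rw [hu])]
  have hφmem : MemLp φ 2 μπ := hφ.2.1.restrict Iππ
  obtain ⟨hΨmem, hΨsum⟩ := hΨ.memLp_and_l2SumTo
  obtain ⟨δ, hδ, hsep⟩ := hx.exists_separation
  have hT := summable_gaussQuadTerm hlam hδ hsep ha.1
  have hinner : ⟪hφmem.toLp φ, hΨmem.toLp Ψ⟫_ℂ = 2 * π * ∑' p, gaussQuadTerm lam x a p :=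
    (hasSum_inner_toLp hrep hφmem hΨmem hΨsum).unique ((ha.hasSum_mul_conj hT).mul_left _)
  have hmain := mul_norm_le_of_mul_sq_le_re_inner (𝕜 := ℂ) (w := hφmem.toLp φ)
    (v := hΨmem.toLp Ψ) (c := gaussFourier lam π) <| by
      rw [hinner, Lp.norm_toLp]
      simpa using gaussFourier_pi_mul_sq_le_tsum hlam hT hΨmem hΨsum
  rw [Lp.norm_toLp, Lp.norm_toLp] at hmain
  rw [← inv_gaussFourier_pi, ← div_eq_inv_mul, le_div_iff₀ (gaussFourier_pos hlam π), mul_comm]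
  exact hmain
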